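/- arXiv:2501.10833 — 3 statements merged into one kernel-verified Lean document; each statement's English description precedes it below -/
import Mathlib

section
/- Let n ≥ 1 and R = ℚ[x_1,…,x_n]. Let Y denote the multiset of the N = binom(2n−1, n) linear forms m_1x_1 + ⋯ + m_nx_n with (m_1,…,m_n) ∈ ℕ^n and m_1+⋯+m_n = n, and let s_j denote the j-th elementary symmetric polynomial of the members of Y. Then the ℚ-subalgebra of R generated by s_1, …, s_n equals the subalgebra R^{S_n} of symmetric polynomials, i.e. every polynomial in x_1,…,x_n with rational coefficients that is invariant under all permutations of the variables is a polynomial with rational coefficients in s_1,…,s_n. -/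
open MvPolynomial Finset

/-- The multiset of the `(2n-1).choose n` linear forms `m₁x₁ + ⋯ + mₙxₙ` with
`m ∈ ℕⁿ` and `m₁ + ⋯ + mₙ = n`. -/
noncomputable def Ymul (n : ℕ) : Multiset (MvPolynomial (Fin n) ℚ) :=
  (Finset.Nat.antidiagonalTuple n n).val.map fun m => ∑ i, (m i : ℚ) • X i

namespace Stmt0Aux

variable (n : ℕ)

noncomputable def L (m : Fin n → ℕ) : MvPolynomial (Fin n) ℚ := ∑ i, (m i : ℚ) • X i

noncomputable def P (N j : ℕ) : MvPolynomial (Fin n) ℚ :=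
  ∑ m ∈ Finset.Nat.antidiagonalTuple n N, L n m ^ j

lemma L_zero : L n 0 = 0 := by simp [L]

lemma L_split (i : Fin n) (m : Fin n → ℕ) :
    L n m = (m i : ℚ) • X i + ∑ t ∈ Finset.univ.erase i, (m t : ℚ) • X t :=
  (Finset.add_sum_erase _ _ (Finset.mem_univ i)).symm

lemma L_update (m : Fin n → ℕ) (i : Fin n) (k : ℕ) :
    L n (Function.update m i (m i + k)) = L n m + (k : ℚ) • X i := by
  rw [L_split n i, L_split n i m]
  have h1 : ∀ t ∈ Finset.univ.erase i, ((Function.update m i (m i + k) t : ℚ) • X t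
      : MvPolynomial (Fin n) ℚ) = (m t : ℚ) • X t := by
    intro t ht
    rw [Function.update_of_ne (Finset.ne_of_mem_erase ht)]
  rw [Finset.sum_congr rfl h1, Function.update_self]
  push_cast
  rw [add_smul]
  abel

lemma P_zero_right (N : ℕ) : P n N 0 = ((Finset.Nat.antidiagonalTuple n N).card : ℚ) • 1 := by
  simp [P, Finset.sum_const, MvPolynomial.smul_eq_C_mul]

lemma P_zero_left (j : ℕ) (hj : 1 ≤ j) : P n 0 j = 0 := by
  rw [P, Finset.Nat.antidiagonalTuple_zero_right, Finset.sum_singleton, L_zero,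
    zero_pow (by omega)]

lemma sum_shift (i : Fin n) (N k : ℕ) (hk1 : 1 ≤ k) (hkN : k ≤ N)
    (f : MvPolynomial (Fin n) ℚ → MvPolynomial (Fin n) ℚ) :
    ∑ m ∈ (Finset.Nat.antidiagonalTuple n N).filter (fun m => k ≤ m i), f (L n m)
      = ∑ m ∈ Finset.Nat.antidiagonalTuple n (N - k), f (L n m + (k : ℚ) • X i) := by
  refine Finset.sum_nbij' (fun m => Function.update m i (m i - k))
    (fun m => Function.update m i (m i + k)) ?_ ?_ ?_ ?_ ?_
  · intro m hm
    rw [Finset.mem_filter, Finset.Nat.mem_antidiagonalTuple] at hm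
    rw [Finset.Nat.mem_antidiagonalTuple]
    rw [Finset.sum_update_of_mem (Finset.mem_univ i)]
    have h2 : ∑ t ∈ Finset.univ \ {i}, m t = N - m i := by
      have := Finset.add_sum_erase Finset.univ m (Finset.mem_univ i)
      rw [hm.1] at this
      have hle : m i ≤ N := by omega
      rw [Finset.sdiff_singleton_eq_erase]
      omega
    rw [h2]
    have hmi : m i ≤ N := by
      have := Finset.add_sum_erase Finset.univ m (Finset.mem_univ i)
      rw [hm.1] at this; omega
    omega
  · intro m hm
    rw [Finset.Nat.mem_antidiagonalTuple] at hm
    rw [Finset.mem_filter, Finset.Nat.mem_antidiagonalTuple]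
    constructor
    · rw [Finset.sum_update_of_mem (Finset.mem_univ i)]
      have h2 : ∑ t ∈ Finset.univ \ {i}, m t = (N - k) - m i := by
        have := Finset.add_sum_erase Finset.univ m (Finset.mem_univ i)
        rw [hm] at this
        rw [Finset.sdiff_singleton_eq_erase]
        omega
      have hmi : m i ≤ N - k := by
        have := Finset.add_sum_erase Finset.univ m (Finset.mem_univ i)
        rw [hm] at this; omega
      rw [h2]
      omega
    · simp
  · intro m hm
    rw [Finset.mem_filter] at hm
    funext t
    rcases eq_or_ne t i with rfl | ht
    · rw [Function.update_self]
      simp only [Function.update_self]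
      omega
    · rw [Function.update_of_ne ht, Function.update_of_ne ht]
  · intro m hm
    funext t
    rcases eq_or_ne t i with rfl | ht
    · rw [Function.update_self]
      simp only [Function.update_self]
      omega
    · rw [Function.update_of_ne ht, Function.update_of_ne ht]
  · intro m hm
    rw [Finset.mem_filter] at hm
    obtain ⟨hm1, hm2⟩ := hm
    have : L n m = L n (Function.update m i (m i - k)) + (k:ℚ) • X i := by
      have := L_update n (Function.update m i (m i - k)) i k
      rw [Function.update_self] at this
      rw [← this]
      congr 1
      have hmk : m i - k + k = m i := by omega
      rw [Function.update_idem, hmk, Function.update_eq_self]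
    rw [this]


lemma key_inner (i : Fin n) (N j : ℕ) :
    ∑ m ∈ Finset.Nat.antidiagonalTuple n N, (m i : ℚ) • L n m ^ j
      = ∑ k ∈ Finset.Icc 1 N, ∑ m ∈ Finset.Nat.antidiagonalTuple n (N - k),
          (L n m + (k : ℚ) • X i) ^ j := by
  have h1 : ∀ m ∈ Finset.Nat.antidiagonalTuple n N,
      (m i : ℚ) • L n m ^ j = ∑ k ∈ Finset.Icc 1 N, if k ≤ m i then L n m ^ j else 0 := by
    intro m hm
    rw [Finset.Nat.mem_antidiagonalTuple] at hm
    have hmi : m i ≤ N := by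
      rw [← hm]
      exact Finset.single_le_sum (fun t _ => Nat.zero_le (m t)) (Finset.mem_univ i)
    rw [Finset.sum_ite, Finset.sum_const_zero, add_zero, Finset.sum_const]
    have hfil : (Finset.Icc 1 N).filter (fun k => k ≤ m i) = Finset.Icc 1 (m i) := by
      ext k
      simp only [Finset.mem_filter, Finset.mem_Icc]
      omega
    rw [hfil, Nat.card_Icc]
    simp only [Nat.add_sub_cancel]
    rw [← Nat.cast_smul_eq_nsmul ℚ]
  rw [Finset.sum_congr rfl h1, Finset.sum_comm]
  refine Finset.sum_congr rfl fun k hk => ?_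
  rw [← Finset.sum_filter]
  exact sum_shift n i N k (Finset.mem_Icc.mp hk).1 (Finset.mem_Icc.mp hk).2 (· ^ j)

lemma pointwise (c k' : ℕ) (a b : MvPolynomial (Fin n) ℚ) (r : ℕ) :
    ((k' : ℚ) • a) ^ r * b * (c : MvPolynomial (Fin n) ℚ)
      = (c : ℚ) • ((k' : ℚ) ^ r • (a ^ r * b)) := by
  rw [smul_pow, smul_eq_C_mul, smul_eq_C_mul, smul_eq_C_mul,
    ← map_natCast (C : ℚ →+* MvPolynomial (Fin n) ℚ) c]
  ring

lemma star (N j : ℕ) :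
    (N : ℚ) • P n N j = ∑ k ∈ Finset.Icc 1 N, ∑ r ∈ Finset.range (j + 1),
      (j.choose r : ℚ) • ((k : ℚ) ^ r • (psum (Fin n) ℚ r * P n (N - k) (j - r))) := by
  have h0 : (N : ℚ) • P n N j
      = ∑ i, ∑ m ∈ Finset.Nat.antidiagonalTuple n N, (m i : ℚ) • L n m ^ j := by
    rw [P, Finset.smul_sum, Finset.sum_comm]
    refine Finset.sum_congr rfl fun m hm => ?_
    rw [Finset.Nat.mem_antidiagonalTuple] at hm
    rw [← Finset.sum_smul]
    congr 1
    rw [← hm]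
    push_cast
    rfl
  rw [h0]
  have h1 : ∀ i : Fin n, ∑ m ∈ Finset.Nat.antidiagonalTuple n N, (m i : ℚ) • L n m ^ j
      = ∑ k ∈ Finset.Icc 1 N, ∑ m ∈ Finset.Nat.antidiagonalTuple n (N - k),
          ∑ r ∈ Finset.range (j + 1),
            ((k : ℚ) • X i) ^ r * L n m ^ (j - r) * (j.choose r : MvPolynomial (Fin n) ℚ) := by
    intro i
    rw [key_inner]
    refine Finset.sum_congr rfl fun k _ => Finset.sum_congr rfl fun m _ => ?_
    rw [add_comm, add_pow]
  rw [Finset.sum_congr rfl (fun i _ => h1 i), Finset.sum_comm]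
  refine Finset.sum_congr rfl fun k _ => ?_
  rw [Finset.sum_congr rfl fun (i : Fin n) (_ : i ∈ Finset.univ) =>
    (Finset.sum_comm (s := Finset.Nat.antidiagonalTuple n (N - k))
      (t := Finset.range (j + 1))
      (f := fun m r => ((k : ℚ) • X i) ^ r * L n m ^ (j - r)
        * (j.choose r : MvPolynomial (Fin n) ℚ))), Finset.sum_comm]
  refine Finset.sum_congr rfl fun r _ => ?_
  rw [psum, P, Finset.sum_mul_sum, Finset.smul_sum, Finset.smul_sum]
  refine Finset.sum_congr rfl fun i _ => ?_
  rw [Finset.smul_sum, Finset.smul_sum]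
  refine Finset.sum_congr rfl fun m _ => ?_
  exact pointwise n (j.choose r) k (X i) (L n m ^ (j - r)) r

def cT (N : ℕ) : ℕ := (Finset.Nat.antidiagonalTuple n N).card

lemma cT_zero : cT n 0 = 1 := by
  rw [cT, Finset.Nat.antidiagonalTuple_zero_right, Finset.card_singleton]

noncomputable def cf : ℕ → ℕ → ℚ
  | 0, _ => 0
  | (N+1), j => (((N + 1 : ℕ) : ℚ))⁻¹ * ∑ k ∈ (Finset.Icc 1 (N + 1)).attach,
      (((k : ℕ) : ℚ) ^ j * (cT n (N + 1 - (k : ℕ)) : ℚ) + (n : ℚ) * cf (N + 1 - (k : ℕ)) j)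
  decreasing_by
    have := k.2
    simp only [Finset.mem_Icc] at this
    omega

lemma cf_zero (j : ℕ) : cf n 0 j = 0 := by rw [cf]

lemma cf_succ (N j : ℕ) : cf n (N + 1) j = (((N + 1 : ℕ) : ℚ))⁻¹ * ∑ k ∈ Finset.Icc 1 (N + 1),
    ((k : ℚ) ^ j * (cT n (N + 1 - k) : ℚ) + (n : ℚ) * cf n (N + 1 - k) j) := by
  rw [cf]
  congr 1
  exact Finset.sum_attach (Finset.Icc 1 (N + 1)) (fun k =>
    ((k : ℚ) ^ j * (cT n (N + 1 - k) : ℚ) + (n : ℚ) * cf n (N + 1 - k) j))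

lemma cf_nonneg (N j : ℕ) : 0 ≤ cf n N j := by
  induction N using Nat.strong_induction_on with
  | _ N ih =>
    match N with
    | 0 => rw [cf_zero]
    | (N + 1) =>
      rw [cf_succ]
      apply mul_nonneg (by positivity)
      apply Finset.sum_nonneg
      intro k hk
      rw [Finset.mem_Icc] at hk
      have h2 := ih (N + 1 - k) (by omega)
      positivity

lemma cf_pos (N j : ℕ) (hN : 1 ≤ N) : 0 < cf n N j := by
  match N, hN with
  | (N + 1), _ =>
    rw [cf_succ]
    apply mul_pos (by positivity)
    have hterm : (0:ℚ) < ((N + 1 : ℕ) : ℚ) ^ j * (cT n (N + 1 - (N + 1)) : ℚ)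
        + (n : ℚ) * cf n (N + 1 - (N + 1)) j := by
      rw [Nat.sub_self, cT_zero, cf_zero]
      have h1 : (0:ℚ) < ((N + 1 : ℕ) : ℚ) ^ j := by positivity
      simpa using h1
    refine lt_of_lt_of_le hterm (Finset.single_le_sum (f := fun k =>
      ((k : ℕ) : ℚ) ^ j * (cT n (N + 1 - k) : ℚ) + (n : ℚ) * cf n (N + 1 - k) j) ?_ ?_)
    · intro k hk
      rw [Finset.mem_Icc] at hk
      have h2 := cf_nonneg n (N + 1 - k) j
      positivity
    · rw [Finset.mem_Icc]; omega

noncomputable def AdjQ (r : ℕ) : Subalgebra ℚ (MvPolynomial (Fin n) ℚ) :=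
  Algebra.adjoin ℚ ((fun i => psum (Fin n) ℚ i) '' Set.Icc 1 r)

lemma AdjQ_mono {r r' : ℕ} (h : r ≤ r') : AdjQ n r ≤ AdjQ n r' :=
  Algebra.adjoin_mono (Set.image_mono (Set.Icc_subset_Icc_right h))

lemma psum_mem_AdjQ {i r : ℕ} (h1 : 1 ≤ i) (h2 : i ≤ r) : psum (Fin n) ℚ i ∈ AdjQ n r :=
  Algebra.subset_adjoin ⟨i, Set.mem_Icc.mpr ⟨h1, h2⟩, rfl⟩

lemma natCast_mul_eq_smul (c : ℕ) (p : MvPolynomial (Fin n) ℚ) :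
    (c : MvPolynomial (Fin n) ℚ) * p = (c : ℚ) • p := by
  rw [smul_eq_C_mul, ← map_natCast (C : ℚ →+* MvPolynomial (Fin n) ℚ) c]



lemma decomp : ∀ N, ∀ j, 1 ≤ j →
    P n N j - cf n N j • psum (Fin n) ℚ j ∈ AdjQ n (j - 1) := by
  intro N
  induction N using Nat.strong_induction_on with
  | _ N ih =>
    intro j hj
    match N with
    | 0 =>
      rw [P_zero_left n j hj, cf_zero, zero_smul, sub_zero]
      exact Subalgebra.zero_mem _
    | (N + 1) =>
      obtain ⟨j, rfl⟩ : ∃ j', j = j' + 1 := ⟨j - 1, by omega⟩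
      have hNq : ((N + 1 : ℕ) : ℚ) ≠ 0 := by positivity
      have hP : P n (N + 1) (j + 1)
          = (((N + 1 : ℕ) : ℚ))⁻¹ • (((N + 1 : ℕ) : ℚ) • P n (N + 1) (j + 1)) := by
        rw [smul_smul, inv_mul_cancel₀ hNq, one_smul]
      rw [hP, star, cf_succ, mul_smul, ← smul_sub]
      apply Subalgebra.smul_mem
      rw [Finset.sum_smul, ← Finset.sum_sub_distrib]
      apply Subalgebra.sum_mem
      intro k hk
      rw [Finset.mem_Icc] at hk
      have hM : N + 1 - k < N + 1 := by omega
      rw [Finset.sum_range_succ, Finset.sum_range_succ']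
      have htop : ((j + 1).choose (j + 1) : ℚ) •
            ((k : ℚ) ^ (j + 1) • (psum (Fin n) ℚ (j + 1) * P n (N + 1 - k) (j + 1 - (j + 1))))
          = ((k : ℚ) ^ (j + 1) * (cT n (N + 1 - k) : ℚ)) • psum (Fin n) ℚ (j + 1) := by
        rw [Nat.choose_self, Nat.cast_one, one_smul, Nat.sub_self, P_zero_right,
          mul_smul_comm, mul_one, smul_smul]
        rfl
      have h0 : ((j + 1).choose 0 : ℚ) •
            ((k : ℚ) ^ 0 • (psum (Fin n) ℚ 0 * P n (N + 1 - k) (j + 1 - 0)))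
          = (n : ℚ) • P n (N + 1 - k) (j + 1) := by
        rw [Nat.choose_zero_right, Nat.cast_one, one_smul, pow_zero, one_smul, Nat.sub_zero,
          psum_zero, Fintype.card_fin, natCast_mul_eq_smul]
      rw [htop, h0, add_smul]
      have hrw : ∀ S B C D : MvPolynomial (Fin n) ℚ,
          S + (n : ℚ) • B + C - (C + D) = S + ((n : ℚ) • B - D) := by
        intro S B C D; abel
      rw [hrw]
      apply Subalgebra.add_mem
      · -- middle terms
        apply Subalgebra.sum_mem
        intro r hr
        rw [Finset.mem_range] at hr
        apply Subalgebra.smul_mem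
        apply Subalgebra.smul_mem
        apply Subalgebra.mul_mem
        · exact psum_mem_AdjQ n (by omega) (by omega)
        · -- P n (N+1-k) (j+1-(r+1)) ∈ AdjQ n j
          have hjr : j + 1 - (r + 1) = j - r := by omega
          rw [hjr]
          have h1 : 1 ≤ j - r := by omega
          have hdec := ih (N + 1 - k) hM (j - r) h1
          have : P n (N + 1 - k) (j - r)
              = (P n (N + 1 - k) (j - r) - cf n (N + 1 - k) (j - r) • psum (Fin n) ℚ (j - r))
                + cf n (N + 1 - k) (j - r) • psum (Fin n) ℚ (j - r) := by abel
          rw [this]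
          apply Subalgebra.add_mem
          · exact AdjQ_mono n (by omega) hdec
          · exact Subalgebra.smul_mem _ (psum_mem_AdjQ n h1 (by omega)) _
      · -- n-part via IH at same j
        rw [mul_smul, ← smul_sub]
        apply Subalgebra.smul_mem
        have hdec := ih (N + 1 - k) hM (j + 1) hj
        simpa using hdec

-- Newton downstairs: elementary symmetric polys of x's lie in the power-sum algebra
lemma esymm_mem_AdjQ : ∀ k, k ≤ n → esymm (Fin n) ℚ k ∈ AdjQ n n := by
  intro k
  induction k using Nat.strong_induction_on with
  | _ k ih =>
    intro hk
    match k, hk with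
    | 0, _ => rw [esymm_zero]; exact one_mem _
    | (k+1), hk =>
      have hne : ((k+1 : ℕ) : ℚ) ≠ 0 := by positivity
      have hmul := mul_esymm_eq_sum (Fin n) ℚ (k+1)
      have heq : esymm (Fin n) ℚ (k+1) = ((k+1:ℕ):ℚ)⁻¹ •
          (((k+1:ℕ) : MvPolynomial (Fin n) ℚ) * esymm (Fin n) ℚ (k+1)) := by
        rw [natCast_mul_eq_smul, smul_smul, inv_mul_cancel₀ hne, one_smul]
      rw [heq, hmul]
      apply Subalgebra.smul_mem
      apply Subalgebra.mul_mem
      · exact Subalgebra.pow_mem _ (Subalgebra.neg_mem _ (one_mem _)) _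
      apply Subalgebra.sum_mem
      intro a ha
      simp only [Finset.mem_filter, Finset.HasAntidiagonal.mem_antidiagonal] at ha
      refine mul_mem (mul_mem (pow_mem (neg_mem (one_mem _)) _) ?_) ?_
      · exact ih a.1 (by omega) (by omega)
      · exact psum_mem_AdjQ n (by omega) (by omega)

-- the subalgebra generated by the esymm of Ymul
noncomputable def Asub : Subalgebra ℚ (MvPolynomial (Fin n) ℚ) :=
  Algebra.adjoin ℚ ((fun j => (Ymul n).esymm j) '' Set.Icc 1 n)

lemma phi_esymm (k : ℕ) :
    aeval (fun m : {m // m ∈ Finset.Nat.antidiagonalTuple n n} => L n m.val)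
      (esymm {m // m ∈ Finset.Nat.antidiagonalTuple n n} ℚ k) = (Ymul n).esymm k := by
  rw [aeval_esymm_eq_multiset_esymm]
  congr 1
  rw [Finset.univ_eq_attach]
  show (Finset.Nat.antidiagonalTuple n n).attach.val.map
      (fun m => L n m.val) = Ymul n
  rw [Finset.attach_val]
  exact Multiset.attach_map_val' _ (fun m => L n m)

lemma phi_psum (k : ℕ) :
    aeval (fun m : {m // m ∈ Finset.Nat.antidiagonalTuple n n} => L n m.val)
      (psum {m // m ∈ Finset.Nat.antidiagonalTuple n n} ℚ k) = P n n k := by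
  rw [psum, map_sum]
  simp only [map_pow, aeval_X]
  rw [Finset.univ_eq_attach, P]
  exact Finset.sum_attach _ (fun m => L n m ^ k)

lemma Ymul_esymm_mem {k : ℕ} (h1 : 1 ≤ k) (h2 : k ≤ n) : (Ymul n).esymm k ∈ Asub n :=
  Algebra.subset_adjoin ⟨k, Set.mem_Icc.mpr ⟨h1, h2⟩, rfl⟩

-- Newton upstairs: power sums of Ymul lie in Asub
lemma P_mem_Asub : ∀ k, 1 ≤ k → k ≤ n → P n n k ∈ Asub n := by
  intro k
  induction k using Nat.strong_induction_on with
  | _ k ih =>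
    intro hk1 hk2
    have h := congrArg
      (aeval (fun m : {m // m ∈ Finset.Nat.antidiagonalTuple n n} => L n m.val))
      (psum_eq_mul_esymm_sub_sum {m // m ∈ Finset.Nat.antidiagonalTuple n n} ℚ k hk1)
    simp only [map_sub, map_mul, map_pow, map_neg, map_one, map_natCast, map_sum,
      phi_esymm, phi_psum] at h
    rw [h]
    apply Subalgebra.sub_mem
    · refine mul_mem (mul_mem (pow_mem (neg_mem (one_mem _)) _) ?_) ?_
      · exact Subalgebra.natCast_mem _ _
      · exact Ymul_esymm_mem n hk1 hk2
    · apply Subalgebra.sum_mem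
      intro a ha
      simp only [Finset.mem_filter, Finset.HasAntidiagonal.mem_antidiagonal, Set.mem_Ioo] at ha
      refine mul_mem (mul_mem (pow_mem (neg_mem (one_mem _)) _) ?_) ?_
      · exact Ymul_esymm_mem n (by omega) (by omega)
      · exact ih a.2 (by omega) (by omega) (by omega)

lemma esymm_hom {R S : Type*} [CommSemiring R] [CommSemiring S] (f : R →+* S)
    (s : Multiset R) (k : ℕ) : (s.map f).esymm k = f (s.esymm k) := by
  rw [Multiset.esymm, Multiset.esymm, Multiset.powersetCard_map, Multiset.map_map,
    map_multiset_sum, Multiset.map_map]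
  congr 1
  apply Multiset.map_congr rfl
  intro x _
  exact Multiset.prod_hom x f

lemma rename_L (e : Equiv.Perm (Fin n)) (m : Fin n → ℕ) :
    rename e (L n m) = L n (m ∘ e.symm) := by
  rw [L, map_sum, L]
  simp only [map_smul, rename_X]
  exact Fintype.sum_equiv e _ _ (fun i => by simp)

lemma map_perm_antidiagonalTuple (e : Equiv.Perm (Fin n)) :
    (Finset.Nat.antidiagonalTuple n n).val.map (fun m => m ∘ e.symm)
      = (Finset.Nat.antidiagonalTuple n n).val := by
  have hinj : Set.InjOn (fun m : Fin n → ℕ => m ∘ e.symm)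
      (Finset.Nat.antidiagonalTuple n n : Set (Fin n → ℕ)) := by
    intro a _ b _ hab
    funext i
    have := congrFun hab (e i)
    simpa using this
  rw [← Finset.image_val_of_injOn hinj]
  congr 1
  ext m
  simp only [Finset.mem_image, Finset.Nat.mem_antidiagonalTuple]
  constructor
  · rintro ⟨m', hm', rfl⟩
    exact (Equiv.sum_comp e.symm m').trans hm'
  · intro hm
    refine ⟨m ∘ e, ?_, by funext i; simp⟩
    exact (Equiv.sum_comp e m).trans hm

lemma rename_Ymul (e : Equiv.Perm (Fin n)) : (Ymul n).map (rename e) = Ymul n := by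
  show ((Finset.Nat.antidiagonalTuple n n).val.map (L n)).map (rename e) = Ymul n
  rw [Multiset.map_map]
  have : ((rename e : MvPolynomial (Fin n) ℚ →ₐ[ℚ] MvPolynomial (Fin n) ℚ) ∘ L n)
      = (L n) ∘ (fun m => m ∘ e.symm) := by
    funext m
    exact rename_L n e m
  rw [this, ← Multiset.map_map (L n) (fun m => m ∘ e.symm), map_perm_antidiagonalTuple]
  rfl

lemma Ymul_esymm_isSymmetric (k : ℕ) : ((Ymul n).esymm k).IsSymmetric := by
  intro e
  have h2 := esymm_hom
    ((rename (e : Fin n ≃ Fin n) : MvPolynomial (Fin n) ℚ →ₐ[ℚ] MvPolynomial (Fin n) ℚ) :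
      MvPolynomial (Fin n) ℚ →+* MvPolynomial (Fin n) ℚ) (Ymul n) k
  simp only [RingHom.coe_coe] at h2
  rw [rename_Ymul n e] at h2
  exact h2.symm


lemma psum_mem_Asub (hn : 1 ≤ n) : ∀ j, 1 ≤ j → j ≤ n → psum (Fin n) ℚ j ∈ Asub n := by
  intro j
  induction j using Nat.strong_induction_on with
  | _ j ih =>
    intro hj1 hj2
    have hd := decomp n n j hj1
    have hsub : AdjQ n (j - 1) ≤ Asub n := by
      apply Algebra.adjoin_le
      rintro _ ⟨i, hi, rfl⟩
      rw [Set.mem_Icc] at hi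
      exact ih i (by omega) hi.1 (by omega)
    have hc := cf_pos n n j hn
    have hkey : psum (Fin n) ℚ j = (cf n n j)⁻¹ •
        (P n n j - (P n n j - cf n n j • psum (Fin n) ℚ j)) := by
      rw [sub_sub_cancel, smul_smul, inv_mul_cancel₀ hc.ne', one_smul]
    rw [hkey]
    exact Subalgebra.smul_mem _
      (Subalgebra.sub_mem _ (P_mem_Asub n j hj1 hj2) (hsub hd)) _

lemma AdjQ_le_Asub (hn : 1 ≤ n) : AdjQ n n ≤ Asub n := by
  apply Algebra.adjoin_le
  rintro _ ⟨i, hi, rfl⟩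
  rw [Set.mem_Icc] at hi
  exact psum_mem_Asub n hn i hi.1 hi.2

end Stmt0Aux

open Stmt0Aux in
/-- The subalgebra of `ℚ[x₁,…,xₙ]` generated by `s₁,…,sₙ`, the elementary symmetric
polynomials of the linear forms `m₁x₁ + ⋯ + mₙxₙ` (over all `m ∈ ℕⁿ` with `∑ mᵢ = n`),
equals the subalgebra of symmetric polynomials. -/
theorem stmt0 (n : ℕ) (hn : 1 ≤ n) :
    Algebra.adjoin ℚ ((fun j => (Ymul n).esymm j) '' Set.Icc 1 n)
      = symmetricSubalgebra (Fin n) ℚ := by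
  apply le_antisymm
  · apply Algebra.adjoin_le
    rintro _ ⟨j, _, rfl⟩
    exact (mem_symmetricSubalgebra _).mpr (Ymul_esymm_isSymmetric n j)
  · intro p hp
    obtain ⟨q, hq⟩ := esymmAlgHom_fin_surjective (R := ℚ) (le_refl n) ⟨p, hp⟩
    have hq' : p = aeval (fun i : Fin n => esymm (Fin n) ℚ (i + 1)) q := by
      rw [← esymmAlgHom_apply, hq]
    have hmem : p ∈ Algebra.adjoin ℚ
        (Set.range fun i : Fin n => esymm (Fin n) ℚ (i + 1)) := by
      rw [Algebra.adjoin_range_eq_range_aeval]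
      exact ⟨q, hq'.symm⟩
    have hle : Algebra.adjoin ℚ (Set.range fun i : Fin n => esymm (Fin n) ℚ (i + 1))
        ≤ Asub n := by
      apply Algebra.adjoin_le
      rintro _ ⟨i, rfl⟩
      exact AdjQ_le_Asub n hn (esymm_mem_AdjQ n (i + 1) i.isLt)
    exact hle hmem
end

section
/- Let n ≥ 1 and let s = x_1 + ⋯ + x_n in ℚ[x_1,…,x_n]. For every r with 0 ≤ r ≤ n, the following polynomial identity holds in ℚ[x_1,…,x_n]: σ_r(x_1 − s/n, …, x_n − s/n) = Σ_{i=0}^{r} (−1)^{r−i} (1/n^{r−i}) · binom(n−i, r−i) · σ_1^{r−i} · σ_i, where σ_i denotes the i-th elementary symmetric polynomial in x_1,…,x_n (with σ_0 = 1). -/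
open MvPolynomial Finset

theorem count_sup (α : Type*) [DecidableEq α] (u A : Finset α) (hA : A ⊆ u) (r : ℕ)
    (hAr : A.card ≤ r) :
    ((u.powersetCard r).filter (fun S => A ⊆ S)).card
      = (u.card - A.card).choose (r - A.card) := by
  rw [← card_sdiff_of_subset hA, ← Finset.card_powersetCard (r - A.card) (u \ A)]
  apply Finset.card_bij (fun S _ => S \ A)
  · intro S hS
    simp only [mem_filter, mem_powersetCard] at hS ⊢
    obtain ⟨⟨hSu, hcard⟩, hAS⟩ := hS
    exact ⟨sdiff_subset_sdiff hSu le_rfl, by rw [card_sdiff_of_subset hAS, hcard]⟩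
  · intro S hS T hT h
    simp only [mem_filter] at hS hT
    rw [← sdiff_union_of_subset hS.2, ← sdiff_union_of_subset hT.2, h]
  · intro T hT
    simp only [mem_powersetCard] at hT
    refine ⟨T ∪ A, ?_, ?_⟩
    · simp only [mem_filter, mem_powersetCard]
      have hTA : Disjoint T A := (subset_sdiff.mp hT.1).2
      refine ⟨⟨union_subset (hT.1.trans (sdiff_subset)) hA, ?_⟩, subset_union_right⟩
      rw [card_union_of_disjoint hTA, hT.2]
      omega
    · rw [union_sdiff_right, sdiff_eq_self_of_disjoint (subset_sdiff.mp hT.1).2]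

/-- The formula `σ_r(x₁ - s/n, …, xₙ - s/n) =
∑_{i=0}^{r} (-1)^{r-i} (1/n^{r-i}) binom(n-i, r-i) σ₁^{r-i} σ_i` in `ℚ[x₁,…,xₙ]`,
where `s = x₁ + ⋯ + xₙ` and `σ_i` is the `i`-th elementary symmetric polynomial. -/
theorem stmt3 (n : ℕ) (hn : 1 ≤ n) (r : ℕ) (hr : r ≤ n) :
    aeval (fun i : Fin n => X i - C ((n : ℚ)⁻¹) * ∑ j, X j) (esymm (Fin n) ℚ r)
      = ∑ i ∈ Finset.range (r + 1),
          C ((-1 : ℚ) ^ (r - i) * ((n : ℚ) ^ (r - i))⁻¹ * ((n - i).choose (r - i) : ℚ))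
            * esymm (Fin n) ℚ 1 ^ (r - i) * esymm (Fin n) ℚ i := by
  set c : MvPolynomial (Fin n) ℚ := -(C ((n : ℚ)⁻¹) * ∑ j, X j) with hc
  have key : aeval (fun i : Fin n => X i - C ((n : ℚ)⁻¹) * ∑ j, X j) (esymm (Fin n) ℚ r)
      = ∑ S ∈ (univ : Finset (Fin n)).powersetCard r,
          ∑ A ∈ S.powerset, (∏ j ∈ A, X j) * c ^ (r - A.card) := by
    rw [esymm, map_sum]
    refine Finset.sum_congr rfl fun S hS => ?_
    rw [map_prod]
    have hXc : ∀ j ∈ S, (aeval ((fun i : Fin n => X i - C ((n : ℚ)⁻¹) * ∑ j, X j) :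
          Fin n → MvPolynomial (Fin n) ℚ)) ((X j : MvPolynomial (Fin n) ℚ))
        = (X j : MvPolynomial (Fin n) ℚ) + c := by intro j _; rw [aeval_X]; ring
    rw [Finset.prod_congr rfl hXc, Finset.prod_add]
    refine Finset.sum_congr rfl fun A hA => ?_
    rw [Finset.prod_const, card_sdiff_of_subset (mem_powerset.mp hA),
      (mem_powersetCard.mp hS).2]
  rw [key]
  have swap : ∑ S ∈ (univ : Finset (Fin n)).powersetCard r,
          ∑ A ∈ S.powerset, (∏ j ∈ A, X j) * c ^ (r - A.card)
      = ∑ A ∈ (univ : Finset (Fin n)).powerset,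
          (((univ : Finset (Fin n)).powersetCard r).filter (fun S => A ⊆ S)).card •
            ((∏ j ∈ A, X j) * c ^ (r - A.card)) := by
    rw [Finset.sum_comm' (s' := fun A => ((univ : Finset (Fin n)).powersetCard r).filter
        (fun S => A ⊆ S)) (t' := (univ : Finset (Fin n)).powerset)
      (f := fun _ A => (∏ j ∈ A, X j) * c ^ (r - A.card))]
    · simp [Finset.sum_const]
    · intro S A
      simp only [mem_powersetCard, mem_powerset, mem_filter]
      constructor
      · rintro ⟨⟨hSu, hScard⟩, hAS⟩
        exact ⟨⟨⟨hSu, hScard⟩, hAS⟩, hAS.trans hSu⟩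
      · rintro ⟨⟨⟨hSu, hScard⟩, hAS⟩, _⟩
        exact ⟨⟨hSu, hScard⟩, hAS⟩
  rw [swap, powerset_card_disjiUnion]
  erw [sum_disjiUnion]
  rw [card_univ, Fintype.card_fin]
  rw [← Finset.sum_subset (Finset.range_subset_range.mpr (by omega : r + 1 ≤ n + 1))
    (fun i _ hi => ?_)]
  · refine Finset.sum_congr rfl fun i hi => ?_
    have hi' : i ≤ r := Nat.lt_succ_iff.mp (Finset.mem_range.mp hi)
    have step : ∀ A ∈ (univ : Finset (Fin n)).powersetCard i,
        (((univ : Finset (Fin n)).powersetCard r).filter (fun S => A ⊆ S)).card •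
            ((∏ j ∈ A, X j) * c ^ (r - A.card))
          = ((n - i).choose (r - i)) • (((∏ j ∈ A, X j) : MvPolynomial (Fin n) ℚ)
              * c ^ (r - i)) := by
      intro A hA
      have hAcard : A.card = i := (mem_powersetCard.mp hA).2
      rw [count_sup _ _ _ (mem_powersetCard.mp hA).1 r (hAcard ▸ hi'), hAcard,
        card_univ, Fintype.card_fin]
    rw [Finset.sum_congr rfl step, ← Finset.smul_sum, ← Finset.sum_mul, ← esymm]
    have hcpow : c ^ (r - i) = C ((-1 : ℚ) ^ (r - i) * ((n : ℚ) ^ (r - i))⁻¹)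
        * esymm (Fin n) ℚ 1 ^ (r - i) := by
      rw [hc, ← esymm_one, neg_pow, mul_pow, ← C_pow]
      simp only [map_mul, map_pow, map_neg, map_one, inv_pow]
      ring
    rw [hcpow, nsmul_eq_mul, C_mul]
    rw [show ((((n - i).choose (r - i)) : ℕ) : MvPolynomial (Fin n) ℚ)
      = C (((n - i).choose (r - i) : ℚ)) by push_cast; rw [C_eq_coe_nat]]
    simp only [C_mul]
    ring
  · -- vanishing terms r < i ≤ n
    refine Finset.sum_eq_zero fun A hA => ?_
    have hAcard : A.card = i := (mem_powersetCard.mp hA).2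
    have : (((univ : Finset (Fin n)).powersetCard r).filter (fun S => A ⊆ S)) = ∅ := by
      refine Finset.filter_eq_empty_iff.mpr fun S hS hAS => ?_
      have := Finset.card_le_card hAS
      rw [hAcard, (mem_powersetCard.mp hS).2] at this
      simp only [Finset.mem_range, not_lt] at hi
      omega
    rw [this, Finset.card_empty, zero_smul]
end

section
/- Let n ≥ 1 and 1 ≤ j ≤ n. Suppose q ∈ ℚ[x_1,…,x_n] is a symmetric polynomial such that: (i) for every integer t, the ℚ-algebra substitution x_i ↦ x_i + t·(x_1 + ⋯ + x_n) (for every i) fixes q; and (ii) q − σ_j lies in the ideal generated by σ_1 = x_1 + ⋯ + x_n. Then q = c̄_j, the reduced Chern class polynomial c̄_j := σ_j(x_1 − s/n, …, x_n − s/n), where s = x_1 + ⋯ + x_n. -/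
open MvPolynomial

/-- The reduced Chern class polynomial `c̄_r := σ_r(x₁ - s/n, …, xₙ - s/n)`,
where `s = x₁ + ⋯ + xₙ`. -/
noncomputable def cbar (n r : ℕ) : MvPolynomial (Fin n) ℚ :=
  aeval (fun i : Fin n => X i - C ((n : ℚ)⁻¹) * ∑ j, X j) (esymm (Fin n) ℚ r)

/-- Uniqueness: if a symmetric polynomial `q ∈ ℚ[x₁,…,xₙ]` is fixed by every
substitution `xᵢ ↦ xᵢ + t·(x₁ + ⋯ + xₙ)` with `t ∈ ℤ`, and `q - σ_j` lies in the
ideal generated by `σ₁`, then `q = c̄_j`. -/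
theorem stmt6 (n : ℕ) (hn : 1 ≤ n) (j : ℕ) (hj1 : 1 ≤ j) (hjn : j ≤ n)
    (q : MvPolynomial (Fin n) ℚ) (hsym : q.IsSymmetric)
    (h1 : ∀ t : ℤ, aeval (fun i : Fin n => X i + C (t : ℚ) * ∑ k, X k) q = q)
    (h2 : q - esymm (Fin n) ℚ j ∈ Ideal.span {esymm (Fin n) ℚ 1}) :
    q = cbar n j := by
  have hn0 : (n : ℚ) ≠ 0 := Nat.cast_ne_zero.mpr (by omega)
  set s : MvPolynomial (Fin n) ℚ := ∑ k, X k with hs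
  set Φ : MvPolynomial (Fin n) ℚ →ₐ[ℚ] Polynomial (MvPolynomial (Fin n) ℚ) :=
    aeval (fun i => Polynomial.C (X i) + Polynomial.X * Polynomial.C s) with hΦ
  set E : ℚ → (Polynomial (MvPolynomial (Fin n) ℚ) →ₐ[ℚ] MvPolynomial (Fin n) ℚ) :=
    fun t => (Polynomial.aeval (C t : MvPolynomial (Fin n) ℚ)).restrictScalars ℚ with hE
  have key : ∀ t : ℚ, (E t).comp Φ = aeval (fun i : Fin n => X i + C t * s) := by
    intro t
    apply MvPolynomial.algHom_ext
    intro i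
    simp only [hΦ, hE, AlgHom.comp_apply, aeval_X, map_add, map_mul,
      AlgHom.restrictScalars_apply, Polynomial.aeval_C, Polynomial.aeval_X,
      Algebra.algebraMap_self_apply]
  have hEq : ∀ t : ℤ, (E (t : ℚ)) (Φ q) = q := by
    intro t
    calc (E (t : ℚ)) (Φ q) = ((E (t : ℚ)).comp Φ) q := rfl
    _ = aeval (fun i : Fin n => X i + C (t : ℚ) * s) q := by rw [key]
    _ = q := h1 t
  have hΦq : Φ q = Polynomial.C q := by
    rw [← sub_eq_zero]
    apply Polynomial.eq_zero_of_infinite_isRoot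
    apply Set.infinite_of_injective_forall_mem
      (f := fun t : ℤ => (C (t : ℚ) : MvPolynomial (Fin n) ℚ))
    · intro a b hab
      exact Int.cast_injective (C_injective _ ℚ hab)
    · intro t
      simp only [Set.mem_setOf_eq, Polynomial.IsRoot, Polynomial.eval_sub, Polynomial.eval_C,
        sub_eq_zero]
    -- eval (C t) (Φ q) = q
      have : Polynomial.eval (C (t : ℚ) : MvPolynomial (Fin n) ℚ) (Φ q)
          = (E (t : ℚ)) (Φ q) := by
        rw [hE]
        simp [← Polynomial.coe_aeval_eq_eval]
      rw [this, hEq]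
  have hfun : (fun i : Fin n => X i + C (-(n : ℚ)⁻¹) * s)
      = fun i : Fin n => X i - C ((n : ℚ)⁻¹) * s := by
    funext i
    rw [map_neg]
    ring
  have hA : aeval (fun i : Fin n => X i - C ((n : ℚ)⁻¹) * s) q = q := by
    have h := congrArg (E (-(n : ℚ)⁻¹)) hΦq
    have hC : (E (-(n : ℚ)⁻¹)) (Polynomial.C q) = q := by
      rw [hE]; simp
    rw [hC] at h
    have h' : ((E (-(n : ℚ)⁻¹)).comp Φ) q = q := h
    rw [key, hfun] at h'
    exact h'
  obtain ⟨g, hg⟩ := Ideal.mem_span_singleton.mp h2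
  have hρ1 : aeval (fun i : Fin n => X i - C ((n : ℚ)⁻¹) * s) (esymm (Fin n) ℚ 1) = 0 := by
    rw [esymm_one]
    simp only [map_sum, aeval_X]
    rw [Finset.sum_sub_distrib, Finset.sum_const, Finset.card_univ, Fintype.card_fin,
      nsmul_eq_mul]
    have : ((n : ℕ) : MvPolynomial (Fin n) ℚ) = C (n : ℚ) := by
      simp
    rw [this, ← mul_assoc, ← map_mul, mul_inv_cancel₀ hn0, map_one, one_mul, ← hs, sub_self]
  have hfin := congrArg (aeval (fun i : Fin n => X i - C ((n : ℚ)⁻¹) * s)) hg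
  rw [map_sub, map_mul, hρ1, zero_mul, sub_eq_zero, hA] at hfin
  rw [hfin]
  rfl
end
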